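/- (Theorem 1, dispreferred sample.) Let E be a real Hilbert space, p_w, p_l : E → ℝ differentiable at θ with p_w(θ) > 0 and p_l(θ) > 0, β > 0, η > 0, r ∈ ℝ, σ(t) = 1/(1+exp(−t)), z = β(log p_w(θ) − log p_l(θ) − r), and L(θ') = −log σ(β(log p_w(θ') − log p_l(θ') − r)). Let Δθ = −η · grad L(θ). Then the first-order change of the dispreferred probability satisfies ⟪grad p_l(θ), Δθ⟫ = η β (1−σ(z)) · p_l(θ) · (⟪g_l, g_w⟫ − ‖g_l‖²), where g_w = grad(log∘p_w)(θ) and g_l = grad(log∘p_l)(θ). -/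

import Mathlib

/-!
The DPO loss is `-log ∘ sigmoid` applied to the margin `β (log p_w - log p_l - r)`.
Since `(-log ∘ sigmoid)' = sigmoid - 1`, the chain rule gives
`∇L(θ) = -β (1 - σ(z)) (g_w - g_l)`, and the log-derivative identity `∇p_l = p_l • g_l`
turns `⟪∇p_l(θ), -η ∇L(θ)⟫` into `η β (1 - σ(z)) p_l(θ) ⟪g_l, g_w - g_l⟫`.
-/

open RealInnerProductSpace

theorem Real.hasDerivAt_neg_log_sigmoid (t : ℝ) :
    HasDerivAt (fun s => -Real.log (Real.sigmoid s)) (Real.sigmoid t - 1) t := by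
  have hlog : HasDerivAt (fun s => Real.log (Real.sigmoid s))
      (Real.sigmoid t * (1 - Real.sigmoid t) / Real.sigmoid t) t :=
    (Real.hasDerivAt_sigmoid t).log (Real.sigmoid_pos t).ne'
  rw [mul_div_cancel_left₀ _ (Real.sigmoid_pos t).ne'] at hlog
  simpa using hlog.fun_neg

section Gradient

variable {E : Type*} [NormedAddCommGroup E] [InnerProductSpace ℝ E] [CompleteSpace E]
  {f g : E → ℝ} {a b x : E}

theorem HasDerivAt.comp_hasGradientAt {φ : ℝ → ℝ} {φ' : ℝ} (hφ : HasDerivAt φ φ' (f x))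
    (hf : HasGradientAt f a x) : HasGradientAt (φ ∘ f) (φ' • a) x := by
  rw [hasGradientAt_iff_hasFDerivAt, map_smul]
  exact hφ.comp_hasFDerivAt x hf.hasFDerivAt

theorem HasGradientAt.log (hf : HasGradientAt f a x) (hx : f x ≠ 0) :
    HasGradientAt (fun y => Real.log (f y)) ((f x)⁻¹ • a) x :=
  (Real.hasDerivAt_log hx).comp_hasGradientAt hf

theorem gradient_eq_smul_gradient_log (hf : DifferentiableAt ℝ f x) (hx : f x ≠ 0) :
    gradient f x = f x • gradient (fun y => Real.log (f y)) x := by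
  rw [(hf.hasGradientAt.log hx).gradient, smul_smul, mul_inv_cancel₀ hx, one_smul]

theorem HasGradientAt.const_mul_sub_sub_const (hf : HasGradientAt f a x)
    (hg : HasGradientAt g b x) (β r : ℝ) :
    HasGradientAt (fun y => β * (f y - g y - r)) (β • (a - b)) x := by
  rw [hasGradientAt_iff_hasFDerivAt, map_smul, map_sub]
  exact ((hf.hasFDerivAt.sub hg.hasFDerivAt).sub_const r).const_mul β

theorem hasGradientAt_dpoLoss (hf : DifferentiableAt ℝ f x) (hg : DifferentiableAt ℝ g x)
    (hf₀ : f x ≠ 0) (hg₀ : g x ≠ 0) (β r : ℝ) :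
    HasGradientAt
      (fun y => -Real.log (Real.sigmoid (β * (Real.log (f y) - Real.log (g y) - r))))
      ((Real.sigmoid (β * (Real.log (f x) - Real.log (g x) - r)) - 1) •
        β • (gradient (fun y => Real.log (f y)) x - gradient (fun y => Real.log (g y)) x)) x :=
  (Real.hasDerivAt_neg_log_sigmoid _).comp_hasGradientAt
    ((hf.log hf₀).hasGradientAt.const_mul_sub_sub_const (hg.log hg₀).hasGradientAt β r)

end Gradient

theorem dpo_dispreferred_probability_update_general
    {E : Type*} [NormedAddCommGroup E] [InnerProductSpace ℝ E] [CompleteSpace E]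
    (p_w p_l : E → ℝ) (θ : E)
    (hw : DifferentiableAt ℝ p_w θ) (hl : DifferentiableAt ℝ p_l θ)
    (hwpos : 0 < p_w θ) (hlpos : 0 < p_l θ)
    (β η r : ℝ)
    (σ : ℝ → ℝ) (hσ : ∀ t, σ t = 1 / (1 + Real.exp (-t)))
    (z : ℝ) (hz : z = β * (Real.log (p_w θ) - Real.log (p_l θ) - r))
    (L : E → ℝ)
    (hL : ∀ θ', L θ' = -Real.log (σ (β * (Real.log (p_w θ') - Real.log (p_l θ') - r))))
    (Δθ : E) (hΔθ : Δθ = (-η) • gradient L θ)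
    (g_w g_l : E)
    (hgw : g_w = gradient (fun θ' => Real.log (p_w θ')) θ)
    (hgl : g_l = gradient (fun θ' => Real.log (p_l θ')) θ) :
    ⟪gradient p_l θ, Δθ⟫ =
      η * β * (1 - σ z) * p_l θ * (⟪g_l, g_w⟫ - ‖g_l‖ ^ 2) := by
  obtain rfl : σ = Real.sigmoid := funext fun t => by rw [hσ, one_div, Real.sigmoid_def]
  have hgradL : gradient L θ = (Real.sigmoid z - 1) • β • (g_w - g_l) := by
    rw [funext hL]
    subst hz hgw hgl
    exact (hasGradientAt_dpoLoss hw hl hwpos.ne' hlpos.ne' β r).gradient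
  have hgradl : gradient p_l θ = p_l θ • g_l := hgl ▸ gradient_eq_smul_gradient_log hl hlpos.ne'
  rw [hΔθ, hgradL, hgradl, real_inner_smul_left, real_inner_smul_right,
    real_inner_smul_right, real_inner_smul_right, inner_sub_right, real_inner_self_eq_norm_sq]
  ring

/-- Theorem 1 (dispreferred sample): after one DPO gradient step `Δθ = -η • ∇L(θ)`,
the first-order change of the dispreferred probability equals
`η β (1-σ(z)) p_l(θ) (⟪g_l, g_w⟫ - ‖g_l‖²)`. -/
theorem dpo_dispreferred_probability_update
    {E : Type*} [NormedAddCommGroup E] [InnerProductSpace ℝ E] [CompleteSpace E]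
    (p_w p_l : E → ℝ) (θ : E)
    (hw : DifferentiableAt ℝ p_w θ) (hl : DifferentiableAt ℝ p_l θ)
    (hwpos : 0 < p_w θ) (hlpos : 0 < p_l θ)
    (β η r : ℝ) (hβ : 0 < β) (hη : 0 < η)
    (σ : ℝ → ℝ) (hσ : ∀ t, σ t = 1 / (1 + Real.exp (-t)))
    (z : ℝ) (hz : z = β * (Real.log (p_w θ) - Real.log (p_l θ) - r))
    (L : E → ℝ)
    (hL : ∀ θ', L θ' = -Real.log (σ (β * (Real.log (p_w θ') - Real.log (p_l θ') - r))))
    (Δθ : E) (hΔθ : Δθ = (-η) • gradient L θ)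
    (g_w g_l : E)
    (hgw : g_w = gradient (fun θ' => Real.log (p_w θ')) θ)
    (hgl : g_l = gradient (fun θ' => Real.log (p_l θ')) θ) :
    ⟪gradient p_l θ, Δθ⟫ =
      η * β * (1 - σ z) * p_l θ * (⟪g_l, g_w⟫ - ‖g_l‖ ^ 2) :=
  dpo_dispreferred_probability_update_general p_w p_l θ hw hl hwpos hlpos β η r σ hσ z hz L hL Δθ
    hΔθ g_w g_l hgw hgl
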